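/- arXiv:1301.0373 — 5 statements merged into one kernel-verified Lean document; each statement's English description precedes it below -/
import Mathlib

section
/- Let q be a prime power, F a finite field with q^2 elements, K a subfield of F with q elements, and α an element of F not in K. Let χ be a multiplicative character of F (with χ(0)=0) whose restriction to the unit group K* of K is nontrivial (i.e., χ(t) ≠ 1 for some nonzero t ∈ K). Then the absolute value of the sum over all t ∈ K of χ(t − α) equals √q. -/
/-!
If `S = ∑_{t ∈ K} χ(t - α)`, then `|S|² = ∑_{t,u ∈ K} χ((t - α)/(u - α))`, because the conjugate of
`χ(x)` is `χ(x⁻¹)`. The diagonal `t = u` contributes `q`. Off the diagonal the ratio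
`(t - α)/(u - α)` never lies in `K` (else `α` would) and determines `(t, u)`, so counting
(`q² - q` on both sides) makes it a bijection onto `F \ K`. The sum of `χ` over `F \ K` is the sum
over `F` minus the sum over `K`, and both vanish since `χ` is nontrivial on `K*`.
-/

open Finset

namespace Subfield

variable {F : Type*} [Field F] (K : Subfield F) {α : F}

theorem sub_ne_zero_of_notMem (hα : α ∉ K) (t : K) : (t : F) - α ≠ 0 :=
  sub_ne_zero.mpr fun h => hα (h ▸ t.2)

theorem sub_div_sub_notMem (hα : α ∉ K) {t u : K} (htu : t ≠ u) :
    ((t : F) - α) / (u - α) ∉ K := by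
  have hu := K.sub_ne_zero_of_notMem hα u
  have hcu : ((t : F) - α) / (u - α) * (u - α) = t - α := div_mul_cancel₀ _ hu
  generalize ((t : F) - α) / (u - α) = c at hcu ⊢
  intro hc
  have hc1 : c ≠ 1 := by
    rintro rfl
    exact htu (Subtype.ext (by simpa using hcu.symm))
  -- `t - α = c (u - α)` can be solved for `α` inside `K` unless `c = 1`.
  have hα_eq : α = (c * u - t) / (c - 1) := by
    rw [eq_div_iff (sub_ne_zero.mpr hc1)]
    linear_combination -hcu
  exact hα (hα_eq ▸ K.div_mem (K.sub_mem (K.mul_mem hc u.2) t.2) (K.sub_mem hc K.one_mem))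

theorem injOn_sub_div_sub (hα : α ∉ K) :
    Set.InjOn (fun p : K × K => ((p.1 : F) - α) / (p.2 - α)) {p | p.1 ≠ p.2} := by
  rintro ⟨t, u⟩ htu ⟨t', u'⟩ - hy
  have hne := K.sub_ne_zero_of_notMem hα
  have hy₁ : ((t : F) - α) / (u - α) * (u - α) = t - α := div_mul_cancel₀ _ (hne u)
  have hy₂ : ((t : F) - α) / (u - α) * (u' - α) = t' - α := by
    rw [show ((t : F) - α) / (u - α) = (t' - α) / (u' - α) from hy]
    exact div_mul_cancel₀ _ (hne u')
  have hy_notMem := K.sub_div_sub_notMem hα htu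
  generalize ((t : F) - α) / (u - α) = y at hy₁ hy₂ hy_notMem
  -- `y (u - u') = t - t'` would put `y` in `K` unless `u = u'`.
  have hu : u = u' := by
    by_contra h
    have hu0 : (u : F) - u' ≠ 0 := sub_ne_zero.mpr fun h' => h (Subtype.ext h')
    refine hy_notMem ?_
    rw [show y = (t - t') / (u - u') by rw [eq_div_iff hu0]; linear_combination hy₁ - hy₂]
    exact K.div_mem (K.sub_mem t.2 t'.2) (K.sub_mem u.2 u'.2)
  subst hu
  rw [Subtype.ext (show (t : F) = t' by linear_combination hy₂ - hy₁)]

variable [Fintype F] [Fintype K] [DecidablePred (· ∈ K)]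

theorem card_filter_notMem (hcard : Fintype.card F = Fintype.card K ^ 2) :
    #{y : F | y ∉ K} = Fintype.card K * Fintype.card K - Fintype.card K := by
  have hK : #{y : F | y ∈ K} = Fintype.card K := (Fintype.card_subtype _).symm
  have := card_filter_add_card_filter_not (s := univ) (fun y : F => y ∈ K)
  rw [hK, card_univ, hcard, sq] at this
  omega

theorem sum_offDiag_sub_div_sub {M : Type*} [AddCommMonoid M] (hα : α ∉ K)
    (hcard : Fintype.card F = Fintype.card K ^ 2) (f : F → M) :
    ∑ p ∈ (univ : Finset K).offDiag, f ((p.1 - α) / (p.2 - α)) = ∑ y with y ∉ K, f y := by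
  have hmaps : ∀ p ∈ (univ : Finset K).offDiag,
      ((p.1 : F) - α) / (p.2 - α) ∈ ({y | y ∉ K} : Finset F) := fun p hp => by
    simpa using K.sub_div_sub_notMem hα (mem_offDiag.mp hp).2.2
  have hinj : Set.InjOn (fun p : K × K => ((p.1 : F) - α) / (p.2 - α)) (univ : Finset K).offDiag :=
    (K.injOn_sub_div_sub hα).mono fun p hp => (mem_offDiag.mp hp).2.2
  have hsurj := surjOn_of_injOn_of_card_le _ (fun p hp => hmaps p hp) hinj (by
    rw [K.card_filter_notMem hcard, offDiag_card, card_univ])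
  exact sum_nbij _ hmaps hinj hsurj fun _ _ => rfl

theorem sum_sub_div_sub {M : Type*} [AddCommMonoid M] (hα : α ∉ K)
    (hcard : Fintype.card F = Fintype.card K ^ 2) (f : F → M) :
    ∑ p : K × K, f ((p.1 - α) / (p.2 - α)) = Fintype.card K • f 1 + ∑ y with y ∉ K, f y := by
  classical
  have hdiag : ∀ p ∈ (univ : Finset K).diag, f ((p.1 - α) / (p.2 - α)) = f 1 := by
    intro p hp
    rw [(mem_diag.mp hp).2, div_self (K.sub_ne_zero_of_notMem hα p.2)]
  rw [← univ_product_univ, ← diag_union_offDiag, sum_union (disjoint_diag_offDiag _),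
    sum_congr rfl hdiag, sum_const, diag_card, card_univ, K.sum_offDiag_sub_div_sub hα hcard]

end Subfield

namespace MulChar

section Subfield

variable {F R : Type*} [Field F] [CommRing R] [IsDomain R] (χ : MulChar F R) (K : Subfield F)
  [Fintype K] {t : F}

theorem sum_subfield_eq_zero (htK : t ∈ K) (ht : t ≠ 0) (hχt : χ t ≠ 1) :
    ∑ x : K, χ x = 0 := by
  refine eq_zero_of_mul_eq_self_left hχt ?_
  have h0 : (⟨t, htK⟩ : K) ≠ 0 := fun h => ht (congrArg Subtype.val h)
  simpa only [mul_sum, ← map_mul, Subfield.coe_mul] using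
    (mulLeft_bijective₀ _ h0).sum_comp (fun x : K => χ x)

theorem sum_notMem_subfield_eq_zero [Fintype F] [DecidablePred (· ∈ K)] (htK : t ∈ K)
    (ht : t ≠ 0) (hχt : χ t ≠ 1) : ∑ y with y ∉ K, χ y = 0 := by
  have hχ : χ ≠ 1 := fun h => hχt (by rw [h, one_apply (isUnit_iff_ne_zero.mpr ht)])
  have hsplit := sum_filter_add_sum_filter_not univ (· ∈ K) χ
  rwa [sum_eq_zero_of_ne_one hχ, sum_subtype (p := (· ∈ K)) _ (by simp) χ,
    χ.sum_subfield_eq_zero K htK ht hχt, zero_add] at hsplit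

end Subfield

theorem norm_sum_sq_eq_sum_sum_div {F ι : Type*} [Field F] [Finite Fˣ] (χ : MulChar F ℂ)
    (s : Finset ι) (g : ι → F) :
    (‖∑ i ∈ s, χ (g i)‖ ^ 2 : ℂ) = ∑ i ∈ s, ∑ j ∈ s, χ (g i / g j) := by
  rw [← Complex.mul_conj', map_sum, sum_mul_sum]
  refine sum_congr rfl fun i _ => sum_congr rfl fun j _ => ?_
  rw [← RCLike.star_def, star_apply', inv_apply', div_eq_mul_inv, map_mul]

end MulChar

theorem katz_sum_quadratic_nontrivial_general
    (q : ℕ)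
    (F : Type*) [Field F] [Fintype F]
    (hF : Fintype.card F = q ^ 2)
    (K : Subfield F) [Fintype ↥K] (hK : Fintype.card ↥K = q)
    (α : F) (hα : α ∉ K)
    (χ : MulChar F ℂ)
    (hχ : ∃ t : F, t ∈ K ∧ t ≠ 0 ∧ χ t ≠ 1) :
    ‖∑ t : ↥K, χ ((t : F) - α)‖ = Real.sqrt q := by
  classical
  obtain ⟨t, htK, ht, hχt⟩ := hχ
  have hsq : (‖∑ t : ↥K, χ ((t : F) - α)‖ ^ 2 : ℂ) = q := by
    rw [χ.norm_sum_sq_eq_sum_sum_div, ← Fintype.sum_prod_type', K.sum_sub_div_sub hα (hK ▸ hF) χ,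
      χ.sum_notMem_subfield_eq_zero K htK ht hχt, map_one, hK, nsmul_one, add_zero]
  rw [← Real.sqrt_sq (norm_nonneg _)]
  exact congrArg Real.sqrt (mod_cast hsq)

/-- **Katz sum for quadratic extensions, nontrivial case.**
Let `q` be a prime power, `F` a finite field with `q^2` elements, `K` a subfield of `F`
with `q` elements, and `α ∈ F \ K`.  If `χ` is a multiplicative character of `F` whose
restriction to `K*` is nontrivial, then `|∑_{t ∈ K} χ(t - α)| = √q`. -/
theorem katz_sum_quadratic_nontrivial
    (q : ℕ) (hq : IsPrimePow q)
    (F : Type*) [Field F] [Fintype F]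
    (hF : Fintype.card F = q ^ 2)
    (K : Subfield F) [Fintype ↥K] (hK : Fintype.card ↥K = q)
    (α : F) (hα : α ∉ K)
    (χ : MulChar F ℂ)
    (hχ : ∃ t : F, t ∈ K ∧ t ≠ 0 ∧ χ t ≠ 1) :
    ‖∑ t : ↥K, χ ((t : F) - α)‖ = Real.sqrt q :=
  katz_sum_quadratic_nontrivial_general q F hF K hK α hα χ hχ
end

section
/- Let q be a prime power, F a finite field with q^2 elements, K a subfield of F with q elements, and α an element of F not in K. Let χ be a nontrivial multiplicative character of F (with χ(0)=0) whose restriction to the unit group K* of K is trivial (i.e., χ(t) = 1 for every nonzero t ∈ K). Then the sum over all t ∈ K of χ(t − α) equals −1. -/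
/-!
Since `χ` is trivial on `K*`, its sum over `K` is `q - 1`. For `α ∉ K` the map
`(c, t) ↦ c (t - α)` from `K* × K` to `F ∖ K` is injective, hence bijective when `|F| = q²`,
and `χ (c (t - α)) = χ (t - α)`; so the sum of `χ` over `F ∖ K` is `(q - 1) S`, with `S` the sum
in question. As `χ` is nontrivial, its sum over `F` vanishes, giving `(q - 1) (1 + S) = 0`.
-/

open Function

namespace Subfield

variable {F : Type*} [Field F] (K : Subfield F) {α : F}

theorem mem_of_mul_mem_left {a x : F} (ha : a ∈ K) (ha0 : a ≠ 0) (h : a * x ∈ K) : x ∈ K := by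
  simpa [ha0] using K.mul_mem (K.inv_mem ha) h

theorem units_mul_sub_notMem (hα : α ∉ K) (c : Kˣ) (t : K) : (c : F) * (t - α) ∉ K := fun h =>
  hα <| by
    simpa using K.sub_mem t.2 (K.mem_of_mul_mem_left (c : K).2 (by simp) h)

theorem injective_units_mul_sub (hα : α ∉ K) :
    Injective fun p : Kˣ × K => (p.1 : F) * (p.2 - α) := by
  rintro ⟨c, t⟩ ⟨c', t'⟩ h
  have hc : c = c' := by
    by_contra hne
    have hne' : ((c : K) : F) - (c' : K) ≠ 0 := by
      simpa [sub_eq_zero, Units.ext_iff] using hne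
    have hmul : (((c : K) : F) - (c' : K)) * α = (c : K) * t - (c' : K) * t' := by
      simp only at h; linear_combination -h
    refine hα (K.mem_of_mul_mem_left (K.sub_mem (c : K).2 (c' : K).2) hne' ?_)
    rw [hmul]
    exact K.sub_mem (K.mul_mem (c : K).2 t.2) (K.mul_mem (c' : K).2 t'.2)
  subst hc
  simpa using mul_left_cancel₀ (by simp) h

theorem bijective_units_mul_sub [Fintype F] [Fintype K] (hα : α ∉ K)
    (hcard : Fintype.card F = Fintype.card K ^ 2) :
    Bijective fun p : Kˣ × K =>
      (⟨(p.1 : F) * (p.2 - α), K.units_mul_sub_notMem hα p.1 p.2⟩ : {x // x ∉ K}) := by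
  classical
  refine (Fintype.bijective_iff_injective_and_card _).2
    ⟨fun p p' h => K.injective_units_mul_sub hα (congrArg Subtype.val h), ?_⟩
  rw [Fintype.card_prod, Fintype.card_subtype_compl, hcard,
    Fintype.card_eq_card_units_add_one (α := K), Nat.sub_eq_of_eq_add]
  ring

end Subfield

namespace MulChar

variable {F R : Type*} [Field F] [CommRing R] (K : Subfield F) [Fintype K]
  {χ : MulChar F R}

theorem sum_subfield_eq_card_units (hχK : ∀ t ∈ K, t ≠ 0 → χ t = 1) :
    ∑ t : K, χ t = Nat.card Kˣ := by
  classical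
  rw [Nat.card_eq_fintype_card, ← sum_one_eq_card_units]
  refine Fintype.sum_congr _ _ fun t => ?_
  rcases eq_or_ne t 0 with rfl | ht
  · simp
  · rw [hχK t t.2 (by simpa using ht), one_apply (Ne.isUnit ht)]

variable [Fintype F] {α : F}

theorem sum_notMem_subfield [DecidablePred (· ∈ K)] (hα : α ∉ K)
    (hcard : Fintype.card F = Fintype.card K ^ 2) (hχK : ∀ t ∈ K, t ≠ 0 → χ t = 1) :
    ∑ x : {x // x ∉ K}, χ x = Nat.card Kˣ * ∑ t : K, χ (t - α) := by
  classical
  rw [← (K.bijective_units_mul_sub hα hcard).sum_comp, Fintype.sum_prod_type]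
  have hχc (c : Kˣ) : χ ((c : K) : F) = 1 := hχK _ (c : K).2 (by simp)
  simp only [map_mul, hχc, one_mul, Finset.sum_const, Finset.card_univ, nsmul_eq_mul,
    Nat.card_eq_fintype_card]

theorem sum_eq_card_units_mul_one_add (hα : α ∉ K) (hcard : Fintype.card F = Fintype.card K ^ 2)
    (hχK : ∀ t ∈ K, t ≠ 0 → χ t = 1) :
    ∑ x : F, χ x = Nat.card Kˣ * (1 + ∑ t : K, χ (t - α)) := by
  classical
  rw [← Fintype.sum_subtype_add_sum_subtype (· ∈ K), sum_notMem_subfield K hα hcard hχK]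
  obtain rfl := Subsingleton.elim ‹Fintype K› (Subtype.fintype (· ∈ K))
  rw [sum_subfield_eq_card_units K hχK]
  ring

end MulChar

theorem katz_sum_quadratic_trivial_general
    (q : ℕ)
    (F : Type*) [Field F] [Fintype F]
    (hF : Fintype.card F = q ^ 2)
    (K : Subfield F) [Fintype ↥K] (hK : Fintype.card ↥K = q)
    (α : F) (hα : α ∉ K)
    (χ : MulChar F ℂ)
    (hχ : ∃ u : F, u ≠ 0 ∧ χ u ≠ 1)
    (hχK : ∀ t : F, t ∈ K → t ≠ 0 → χ t = 1) :
    ∑ t : ↥K, χ ((t : F) - α) = -1 := by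
  have hχ1 : χ ≠ 1 := by
    obtain ⟨u, hu0, hu⟩ := hχ
    exact MulChar.ne_one_iff.2 ⟨Units.mk0 u hu0, hu⟩
  have hsum := MulChar.sum_eq_card_units_mul_one_add K hα (hK ▸ hF) hχK
  rw [MulChar.sum_eq_zero_of_ne_one hχ1, eq_comm, mul_eq_zero] at hsum
  have hKx : (Nat.card Kˣ : ℂ) ≠ 0 := Nat.cast_ne_zero.2 Nat.card_pos.ne'
  linear_combination hsum.resolve_left hKx

/-- **Katz sum for quadratic extensions, trivial-on-`K*` case.**
Let `q` be a prime power, `F` a finite field with `q^2` elements, `K` a subfield of `F`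
with `q` elements, and `α ∈ F \ K`.  If `χ` is a nontrivial multiplicative character of `F`
whose restriction to `K*` is trivial, then `∑_{t ∈ K} χ(t - α) = -1`. -/
theorem katz_sum_quadratic_trivial
    (q : ℕ) (hq : IsPrimePow q)
    (F : Type*) [Field F] [Fintype F]
    (hF : Fintype.card F = q ^ 2)
    (K : Subfield F) [Fintype ↥K] (hK : Fintype.card ↥K = q)
    (α : F) (hα : α ∉ K)
    (χ : MulChar F ℂ)
    (hχ : ∃ u : F, u ≠ 0 ∧ χ u ≠ 1)
    (hχK : ∀ t : F, t ∈ K → t ≠ 0 → χ t = 1) :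
    ∑ t : ↥K, χ ((t : F) - α) = -1 :=
  katz_sum_quadratic_trivial_general q F hF K hK α hα χ hχ hχK
end

section
/- Let q be a prime power, F a finite field with q^2 elements, K a subfield of F with q elements, and α an element of F not in K. Then the map sending an ordered pair (t₁, t₂) of distinct elements of K to (t₁ − α)/(t₂ − α) is a bijection from {(t₁, t₂) ∈ K × K : t₁ ≠ t₂} onto the complement F \ K of K in F. -/
/-!
Since `α ∉ K`, the elements `1` and `α` are linearly independent over `K`. Comparing
coefficients of `1` and `α` after clearing denominators shows that `(t₁ - α) / (t₂ - α)`
lies in `K` only when `t₁ = t₂`, and that it determines the pair `(t₁, t₂)`. Both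
`K.offDiag` and `F \ K` have `q² - q` elements, so the injection is a bijection.
-/

namespace Subfield

variable {F : Type*} [Field F] {K : Subfield F} {α : F}

theorem sub_ne_zero_of_mem_of_notMem (hα : α ∉ K) {t : F} (ht : t ∈ K) : t - α ≠ 0 :=
  sub_ne_zero.2 fun h => hα (h ▸ ht)

theorem eq_zero_of_add_mul_eq_zero (hα : α ∉ K) {a b : F} (ha : a ∈ K) (hb : b ∈ K)
    (h : a + b * α = 0) : a = 0 ∧ b = 0 := by
  have hb0 : b = 0 := by
    by_contra hb0
    have hα_eq : α = -a / b := by field_simp; linear_combination h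
    exact hα (hα_eq ▸ K.div_mem (K.neg_mem ha) hb)
  exact ⟨by simpa [hb0] using h, hb0⟩

theorem mapsTo_div_sub (hα : α ∉ K) :
    Set.MapsTo (fun p : F × F => (p.1 - α) / (p.2 - α)) (K : Set F).offDiag (K : Set F)ᶜ := by
  rintro ⟨t₁, t₂⟩ ⟨ht₁, ht₂, hne⟩ (hk : (t₁ - α) / (t₂ - α) ∈ K)
  set k := (t₁ - α) / (t₂ - α) with hk_def
  have hcross : t₁ - α = k * (t₂ - α) := by
    rw [hk_def, div_mul_cancel₀ _ (sub_ne_zero_of_mem_of_notMem hα ht₂)]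
  obtain ⟨hconst, hk1⟩ := eq_zero_of_add_mul_eq_zero hα (K.sub_mem ht₁ (K.mul_mem hk ht₂))
    (K.sub_mem hk K.one_mem) (by linear_combination hcross)
  exact hne (by linear_combination hconst + t₂ * hk1)

theorem injOn_div_sub (hα : α ∉ K) :
    Set.InjOn (fun p : F × F => (p.1 - α) / (p.2 - α)) (K : Set F).offDiag := by
  rintro ⟨t₁, t₂⟩ ⟨ht₁, ht₂, -⟩ ⟨s₁, s₂⟩ ⟨hs₁, hs₂, hs⟩ h
  have hcross : (t₁ - α) * (s₂ - α) = (s₁ - α) * (t₂ - α) :=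
    (div_eq_div_iff (sub_ne_zero_of_mem_of_notMem hα ht₂)
      (sub_ne_zero_of_mem_of_notMem hα hs₂)).1 h
  obtain ⟨hprod, hsum⟩ := eq_zero_of_add_mul_eq_zero hα
    (K.sub_mem (K.mul_mem ht₁ hs₂) (K.mul_mem hs₁ ht₂))
    (K.sub_mem (K.sub_mem (K.add_mem hs₁ ht₂) ht₁) hs₂) (by linear_combination hcross)
  -- `t₁ - s₁ = t₂ - s₂ =: d`, and `t₁ s₂ = s₁ t₂` then reads `d (s₂ - s₁) = 0`.
  have hd : t₁ - s₁ = 0 := by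
    have hfactor : (t₁ - s₁) * (s₂ - s₁) = 0 := by linear_combination hprod + s₁ * hsum
    exact (mul_eq_zero.1 hfactor).resolve_right (sub_ne_zero.2 hs.symm)
  have h₁ : t₁ = s₁ := sub_eq_zero.1 hd
  have h₂ : t₂ = s₂ := by linear_combination hsum + hd
  rw [h₁, h₂]

theorem bijOn_div_sub_offDiag_compl [Fintype F] [Fintype K] (hα : α ∉ K)
    (hcard : Fintype.card F = Fintype.card K ^ 2) :
    Set.BijOn (fun p : F × F => (p.1 - α) / (p.2 - α)) (K : Set F).offDiag (K : Set F)ᶜ := by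
  classical
  set S := (K : Set F).toFinset
  have hS : S.card = Fintype.card K := Set.toFinset_card _
  have hdom : (S.offDiag : Set (F × F)) = (K : Set F).offDiag := by
    rw [Finset.coe_offDiag, Set.coe_toFinset]
  have htgt : ((Sᶜ : Finset F) : Set F) = (K : Set F)ᶜ := by
    rw [Finset.coe_compl, Set.coe_toFinset]
  have hle : Sᶜ.card ≤ S.offDiag.card := by
    rw [Finset.card_compl, Finset.offDiag_card, hS, hcard, sq]
  have hmaps := mapsTo_div_sub (K := K) hα
  have hinj := injOn_div_sub (K := K) hα
  rw [← hdom] at hmaps hinj ⊢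
  rw [← htgt] at hmaps ⊢
  exact ⟨hmaps, hinj, Finset.surjOn_of_injOn_of_card_le _ hmaps hinj hle⟩

end Subfield

theorem bijOn_div_sub_general
    (q : ℕ)
    (F : Type*) [Field F] [Fintype F]
    (hF : Fintype.card F = q ^ 2)
    (K : Subfield F) [Fintype ↥K] (hK : Fintype.card ↥K = q)
    (α : F) (hα : α ∉ K) :
    Set.BijOn (fun p : F × F => (p.1 - α) / (p.2 - α))
      {p : F × F | p.1 ∈ K ∧ p.2 ∈ K ∧ p.1 ≠ p.2}
      {x : F | x ∉ K} :=
  Subfield.bijOn_div_sub_offDiag_compl hα (by rw [hF, hK])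

/-- Let `q` be a prime power, `F` a finite field with `q^2` elements, `K` a subfield of
`F` with `q` elements, and `α ∈ F \ K`.  Then `(t₁, t₂) ↦ (t₁ − α)/(t₂ − α)` is a
bijection from `{(t₁, t₂) ∈ K × K : t₁ ≠ t₂}` onto `F \ K`. -/
theorem bijOn_div_sub
    (q : ℕ) (hq : IsPrimePow q)
    (F : Type*) [Field F] [Fintype F]
    (hF : Fintype.card F = q ^ 2)
    (K : Subfield F) [Fintype ↥K] (hK : Fintype.card ↥K = q)
    (α : F) (hα : α ∉ K) :
    Set.BijOn (fun p : F × F => (p.1 - α) / (p.2 - α))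
      {p : F × F | p.1 ∈ K ∧ p.2 ∈ K ∧ p.1 ≠ p.2}
      {x : F | x ∉ K} :=
  bijOn_div_sub_general q F hF K hK α hα
end

section
/- Let p be a prime, a and b positive integers with b dividing a, q = p^a, and n > 1 an integer. Set N = (q^n − 1)/(p^b − 1). Let F be a finite field with q^n elements, K a subfield of F with q elements, α ∈ F with F = K(α), and g a generator of the cyclic group F*. Then the map from K to ℤ/Nℤ sending t to log_g(t − α) modulo N is injective; in particular the set M = {log_g(t − α) mod N : t ∈ K} has exactly q elements. -/
/-- **Injectivity of discrete logarithms modulo `N` (from Theorem 3.2).**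
Let `p` be a prime, `b ∣ a` positive, `q = p^a`, `n > 1`, `N = (q^n − 1)/(p^b − 1)`.
Let `F` be a finite field with `q^n` elements, `K` a subfield with `q` elements,
`α ∈ F` with `K(α) = F`, and `g` a generator of `Fˣ`.  Then `t ↦ log_g(t − α) mod N`
is injective on `K`; in particular `M = {log_g(t − α) mod N : t ∈ K}` has `q` elements. -/
theorem log_mod_injective
    (p a b q n N : ℕ) (hp : p.Prime) (ha : 0 < a) (hb : 0 < b) (hba : b ∣ a)
    (hq : q = p ^ a) (hn : 1 < n)
    (hN : N = (q ^ n - 1) / (p ^ b - 1))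
    (F : Type*) [Field F] [Fintype F]
    (hF : Fintype.card F = q ^ n)
    (K : Subfield F) [Fintype ↥K] (hK : Fintype.card ↥K = q)
    (α : F) (hα : Subfield.closure ((K : Set F) ∪ {α}) = ⊤)
    (g : Fˣ) (hg : ∀ x : Fˣ, x ∈ Subgroup.zpowers g)
    (log : F → ℕ)
    (hlog : ∀ u : F, u ≠ 0 → log u < q ^ n - 1 ∧ (g : F) ^ log u = u) :
    Function.Injective (fun t : ↥K => ((log ((t : F) - α) : ZMod N))) ∧
      (Finset.univ.image (fun t : ↥K => ((log ((t : F) - α) : ZMod N)))).card = q := by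
  classical
  have hq1 : 1 < q := by rw [hq]; exact Nat.one_lt_pow ha.ne' hp.one_lt
  have hqn1 : 1 < q ^ n := Nat.one_lt_pow (by omega) hq1
  have hpb1 : 1 < p ^ b := Nat.one_lt_pow hb.ne' hp.one_lt
  -- α is not in K
  have hαK : α ∉ K := by
    intro hmem
    have h1 : Subfield.closure ((K : Set F) ∪ {α}) ≤ K := by
      apply Subfield.closure_le.mpr
      rintro x (hx | hx)
      · exact hx
      · simp only [Set.mem_singleton_iff] at hx; subst hx; exact hmem
    rw [hα] at h1
    have hKtop : K = ⊤ := le_antisymm le_top h1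
    have hcard : Fintype.card ↥K = Fintype.card F := by
      exact Fintype.card_congr (Equiv.subtypeUnivEquiv fun x => h1 (Subfield.mem_top x))
    rw [hK, hF] at hcard
    have : q < q ^ n := by
      calc q = q ^ 1 := (pow_one q).symm
        _ < q ^ n := Nat.pow_lt_pow_right hq1 hn
    omega
  have hne : ∀ t : ↥K, (t : F) - α ≠ 0 := by
    intro t h
    have : α = (t : F) := by linear_combination -h
    exact hαK (this ▸ t.2)
  -- divisibility and the key identity N * (p^b - 1) = q^n - 1
  have hdvd : p ^ b - 1 ∣ q ^ n - 1 := by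
    obtain ⟨j, hj⟩ := hba
    have : q ^ n = (p ^ b) ^ (j * n) := by
      rw [hq, hj, ← pow_mul, ← pow_mul]; ring_nf
    rw [this]
    simpa using Nat.sub_dvd_pow_sub_pow (p ^ b) 1 (j * n)
  have hNmul : N * (p ^ b - 1) = q ^ n - 1 := by
    rw [hN]; exact Nat.div_mul_cancel hdvd
  have hN0 : N ≠ 0 := by
    intro h; rw [h, zero_mul] at hNmul; omega
  -- g has order dividing q^n - 1
  have hcardU : Fintype.card Fˣ = q ^ n - 1 := by
    rw [Fintype.card_units, hF]
  have hgord : (g : F) ^ (q ^ n - 1) = 1 := by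
    have : g ^ (q ^ n - 1) = 1 := by rw [← hcardU]; exact pow_card_eq_one
    calc (g : F) ^ (q ^ n - 1) = ((g ^ (q ^ n - 1) : Fˣ) : F) := by
          rw [Units.val_pow_eq_pow_val]
      _ = 1 := by rw [this]; rfl
  have hg0 : (g : F) ≠ 0 := Units.ne_zero g
  -- the set of solutions of x^q = x is exactly K
  have hKfix : ∀ x : F, x ^ q = x → x ∈ K := by
    intro x hx
    classical
    set S : Finset F := Finset.univ.filter (fun y => y ^ q = y) with hS
    have hKS : (K : Set F).toFinset ⊆ S := by
      intro y hy
      rw [Set.mem_toFinset] at hy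
      simp only [hS, Finset.mem_filter, Finset.mem_univ, true_and]
      have : (⟨y, hy⟩ : ↥K) ^ (Fintype.card ↥K) = ⟨y, hy⟩ := FiniteField.pow_card _
      rw [hK] at this
      have := congrArg (Subtype.val) this
      push_cast at this
      exact this
    have hScard : S.card ≤ q := by
      have hf0 : (Polynomial.X ^ q - Polynomial.X : Polynomial F) ≠ 0 :=
        FiniteField.X_pow_card_sub_X_ne_zero F hq1
      have hsub : S ⊆ (Polynomial.X ^ q - Polynomial.X : Polynomial F).roots.toFinset := by
        intro y hy
        simp only [hS, Finset.mem_filter, Finset.mem_univ, true_and] at hy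
        rw [Multiset.mem_toFinset, Polynomial.mem_roots hf0]
        simp [sub_eq_zero, hy]
      calc S.card ≤ (Polynomial.X ^ q - Polynomial.X : Polynomial F).roots.toFinset.card :=
            Finset.card_le_card hsub
        _ ≤ Multiset.card (Polynomial.X ^ q - Polynomial.X : Polynomial F).roots :=
            Multiset.toFinset_card_le _
        _ ≤ (Polynomial.X ^ q - Polynomial.X : Polynomial F).natDegree :=
            Polynomial.card_roots' _
        _ = q := FiniteField.X_pow_card_sub_X_natDegree_eq F hq1
    have hKcard : (K : Set F).toFinset.card = q := by
      rw [Set.toFinset_card]; rw [← hK]; rfl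
    have hEq : (K : Set F).toFinset = S :=
      Finset.eq_of_subset_of_card_le hKS (by omega)
    have hxS : x ∈ S := by
      simp only [hS, Finset.mem_filter, Finset.mem_univ, true_and]; exact hx
    rw [← hEq, Set.mem_toFinset] at hxS
    exact hxS
  -- main injectivity
  have hinj : Function.Injective (fun t : ↥K => ((log ((t : F) - α) : ZMod N))) := by
    intro t₁ t₂ h
    simp only at h
    set m₁ := log ((t₁ : F) - α) with hm₁def
    set m₂ := log ((t₂ : F) - α) with hm₂def
    obtain ⟨hlt₁, hpow₁⟩ := hlog _ (hne t₁)
    obtain ⟨hlt₂, hpow₂⟩ := hlog _ (hne t₂)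
    have hmod : m₁ ≡ m₂ [MOD N] := (ZMod.natCast_eq_natCast_iff _ _ _).mp h
    obtain ⟨k, hk⟩ := hmod.dvd
    set c : F := (g : F) ^ ((N : ℤ) * k) with hc
    have heq : (t₂ : F) - α = ((t₁ : F) - α) * c := by
      rw [← hpow₁, ← hpow₂, hc, ← zpow_natCast (g : F) (log ((t₁ : F) - α)),
        ← zpow_natCast (g : F) (log ((t₂ : F) - α)), ← zpow_add₀ hg0]
      congr 1
      have : (m₂ : ℤ) - m₁ = N * k := hk
      omega
    have hc1 : c ^ (p ^ b - 1) = 1 := by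
      rw [hc, ← zpow_natCast, ← zpow_mul]
      have hexp : (N : ℤ) * k * ((p ^ b - 1 : ℕ) : ℤ) = ((q ^ n - 1 : ℕ) : ℤ) * k := by
        rw [← hNmul]; push_cast; ring
      rw [hexp, zpow_mul, zpow_natCast, hgord, one_zpow]
    have hcb : c ^ (p ^ b) = c := by
      have h1 : p ^ b = (p ^ b - 1) + 1 := by omega
      rw [h1, pow_succ, hc1, one_mul]
    have hcbj : ∀ j, c ^ (p ^ (b * j)) = c := by
      intro j
      induction j with
      | zero => simp
      | succ j ih => rw [Nat.mul_succ, pow_add, pow_mul, ih, hcb]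
    have hcK : c ∈ K := by
      apply hKfix
      obtain ⟨j, hj⟩ := hba
      rw [hq, hj]
      exact hcbj j
    by_cases hcone : c = 1
    · apply Subtype.ext
      have h2 : (t₂ : F) - α = (t₁ : F) - α := by rw [heq, hcone, mul_one]
      exact (sub_left_inj.mp h2).symm
    · exfalso
      have hcm1 : c - 1 ≠ 0 := sub_ne_zero.mpr hcone
      have hαeq : α = ((t₁ : F) * c - t₂) * (c - 1)⁻¹ := by
        field_simp
        linear_combination heq
      apply hαK
      rw [hαeq]
      exact K.mul_mem (K.sub_mem (K.mul_mem t₁.2 hcK) t₂.2)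
        (K.inv_mem (K.sub_mem hcK K.one_mem))
  refine ⟨hinj, ?_⟩
  rw [Finset.card_image_of_injective _ hinj, Finset.card_univ, hK]
end

section
/- Let q be a prime power, N = q^2 − 1, F a finite field with q^2 elements, K a subfield of F with q elements, α ∈ F \ K, and g a generator of the cyclic group F*. For u ∈ F* let log_g u be the unique integer m with 0 ≤ m < N and g^m = u. Then for all integers k₁, k₂ with 0 ≤ k₁, k₂ ≤ N−1, k₁ ≠ k₂, and (q−1) dividing (k₁ − k₂), one has 1 + ∑_{t∈K} exp(2πi·(k₁−k₂)·log_g(t−α)/N) = 0. Consequently, the columns of the (q+1) × N matrix Φ whose column indexed by j has the entry (1/√(q+1))·1 together with the entries (1/√(q+1))·exp(2πi·j·log_g(t−α)/N) for t ∈ K are pairwise orthogonal within each residue class of column indices modulo q−1; that is, for each 0 ≤ j ≤ q−2, the q+1 columns indexed by T_j = {j + k(q−1) : 0 ≤ k ≤ q} form an orthonormal set in ℂ^{q+1}. -/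
open Complex Finset

/-- Every element of `F` satisfying `x ^ q = x` lies in the subfield `K` of cardinality `q`. -/
lemma mem_subfield_of_pow_card {F : Type*} [Field F] [Fintype F]
    (q : ℕ) (hq2 : 2 ≤ q) (K : Subfield F) [Fintype ↥K] (hK : Fintype.card ↥K = q)
    (x : F) (hx : x ^ q = x) : x ∈ K := by
  classical
  set p : Polynomial F := Polynomial.X ^ q - Polynomial.X with hp
  have hco : p.coeff q = 1 := by
    simp [hp, Polynomial.coeff_X_pow, Polynomial.coeff_X]
    omega
  have hpne : p ≠ 0 := fun h => by simp [h] at hco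
  have hdeg : p.natDegree ≤ q := by
    refine le_trans (Polynomial.natDegree_sub_le _ _) ?_
    simp [Polynomial.natDegree_X_pow, Polynomial.natDegree_X]
    omega
  set KF : Finset F := Finset.univ.image (fun t : ↥K => (t : F)) with hKF
  have hKFcard : KF.card = q := by
    rw [hKF, Finset.card_image_of_injective _ Subtype.val_injective, Finset.card_univ, hK]
  have hsub : KF ⊆ p.roots.toFinset := by
    intro y hy
    rw [hKF, Finset.mem_image] at hy
    obtain ⟨t, _, rfl⟩ := hy
    have ht : ((t : F)) ^ q = (t : F) := by
      have h := FiniteField.pow_card t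
      rw [hK] at h
      exact_mod_cast congrArg (Subtype.val) h
    rw [Multiset.mem_toFinset, Polynomial.mem_roots hpne]
    simp [Polynomial.IsRoot, hp, ht]
  have hcardle : p.roots.toFinset.card ≤ KF.card := by
    rw [hKFcard]
    exact le_trans (Multiset.toFinset_card_le _) (le_trans (Polynomial.card_roots' p) hdeg)
  have heq : KF = p.roots.toFinset := Finset.eq_of_subset_of_card_le hsub hcardle
  have hxr : x ∈ p.roots.toFinset := by
    rw [Multiset.mem_toFinset, Polynomial.mem_roots hpne]
    simp [Polynomial.IsRoot, hp, hx]
  rw [← heq, hKF, Finset.mem_image] at hxr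
  obtain ⟨t, _, rfl⟩ := hxr
  exact t.2

lemma gpow_mem {F : Type*} [Field F] [Fintype F]
    (q : ℕ) (hq2 : 2 ≤ q) (hF : Fintype.card F = q ^ 2)
    (K : Subfield F) [Fintype ↥K] (hK : Fintype.card ↥K = q) (g : Fˣ) (k : ℕ) :
    (g : F) ^ ((q + 1) * k) ∈ K := by
  classical
  have hgN : (g : F) ^ (q ^ 2 - 1) = 1 := by
    have h1 : g ^ (Fintype.card Fˣ) = 1 := pow_card_eq_one
    have hcard : Fintype.card Fˣ = q ^ 2 - 1 := by rw [Fintype.card_units, hF]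
    rw [hcard] at h1
    calc (g : F) ^ (q ^ 2 - 1) = ((g ^ (q ^ 2 - 1) : Fˣ) : F) := (Units.val_pow_eq_pow_val _ _).symm
    _ = 1 := by rw [h1]; rfl
  apply mem_subfield_of_pow_card q hq2 K hK
  have h1 : 1 ≤ q ^ 2 := Nat.one_le_pow _ _ (by omega)
  have harith : (q + 1) * k * q = (q + 1) * k + (q ^ 2 - 1) * k := by
    zify [h1]; ring
  rw [← pow_mul, harith, pow_add, pow_mul (g : F) (q ^ 2 - 1) k, hgN, one_pow, mul_one]

lemma inj_aux {F : Type*} [Field F] [Fintype F]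
    (q : ℕ) (hq2 : 2 ≤ q) (hF : Fintype.card F = q ^ 2)
    (K : Subfield F) [Fintype ↥K] (hK : Fintype.card ↥K = q)
    (α : F) (hα : α ∉ K) (g : Fˣ)
    {a b : ℕ} (hmod : a % (q + 1) = b % (q + 1)) (hba : b ≤ a) {t s : F}
    (ht : t ∈ K) (hs : s ∈ K)
    (hta : t - α = (g : F) ^ a) (hsa : s - α = (g : F) ^ b) : t = s := by
  obtain ⟨k, hk⟩ : ∃ k, a = b + (q + 1) * k := by
    have hd : (q + 1) ∣ (a - b) := (Nat.modEq_iff_dvd' hba).mp hmod.symm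
    obtain ⟨k, hk⟩ := hd
    exact ⟨k, by omega⟩
  have hcK : (g : F) ^ ((q + 1) * k) ∈ K := gpow_mem q hq2 hF K hK g k
  set c := (g : F) ^ ((q + 1) * k) with hc
  have htc : t - α = (s - α) * c := by rw [hta, hsa, hk, pow_add]
  by_cases hc1 : c = 1
  · rw [hc1, mul_one] at htc
    exact sub_left_inj.mp htc
  · exfalso
    apply hα
    have h1c : (1 : F) - c ≠ 0 := sub_ne_zero.mpr (Ne.symm hc1)
    have hα' : α = (t - s * c) * ((1 : F) - c)⁻¹ := by
      field_simp
      linear_combination -htc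
    rw [hα']
    exact K.mul_mem (K.sub_mem ht (K.mul_mem hs hcK)) (K.inv_mem (K.sub_mem K.one_mem hcK))

lemma key_sum {F : Type*} [Field F] [Fintype F]
    (q N : ℕ) (hq2 : 2 ≤ q) (hF : Fintype.card F = q ^ 2) (hN : N = q ^ 2 - 1)
    (K : Subfield F) [Fintype ↥K] (hK : Fintype.card ↥K = q)
    (α : F) (hα : α ∉ K) (g : Fˣ)
    (log : F → ℕ) (hlog : ∀ u : F, u ≠ 0 → log u < N ∧ (g : F) ^ log u = u)
    (m : ℤ) (hm : ¬ ((q : ℤ) + 1) ∣ m) (d : ℂ) (hd : d = (m : ℂ) * ((q : ℂ) - 1)) :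
    (1 : ℂ) + ∑ t : ↥K, Complex.exp (2 * (Real.pi : ℂ) * Complex.I * d *
      (log ((t : F) - α) : ℂ) / (N : ℂ)) = 0 := by
  classical
  have h1q : 1 ≤ q ^ 2 := Nat.one_le_pow _ _ (by omega)
  have hq1 : ((q : ℂ) + 1) ≠ 0 := by
    have : ((q + 1 : ℕ) : ℂ) ≠ 0 := Nat.cast_ne_zero.mpr (by omega)
    push_cast at this; exact this
  have hqm1 : ((q : ℂ) - 1) ≠ 0 := by
    intro h
    have : (q : ℂ) = 1 := by linear_combination h
    have : q = 1 := by exact_mod_cast this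
    omega
  set ω : ℂ := Complex.exp (2 * (Real.pi : ℂ) * Complex.I * m / ((q : ℂ) + 1)) with hω
  have hωpow : ω ^ (q + 1) = 1 := by
    rw [hω, ← Complex.exp_nat_mul]
    have he : ((q + 1 : ℕ) : ℂ) * (2 * (Real.pi : ℂ) * Complex.I * m / ((q : ℂ) + 1))
        = m * (2 * Real.pi * Complex.I) := by
      push_cast
      field_simp
    rw [he, Complex.exp_int_mul_two_pi_mul_I]
  have hωne : ω ≠ 1 := by
    intro h
    rw [hω, Complex.exp_eq_one_iff] at h
    obtain ⟨n, hn⟩ := h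
    apply hm
    rw [div_eq_iff hq1] at hn
    have h2 : (2 * (Real.pi : ℂ) * Complex.I) ≠ 0 := by
      refine mul_ne_zero (mul_ne_zero two_ne_zero ?_) Complex.I_ne_zero
      exact Complex.ofReal_ne_zero.mpr Real.pi_ne_zero
    have hmc : (m : ℂ) = n * ((q : ℂ) + 1) := by
      apply mul_left_cancel₀ h2
      linear_combination hn
    have hm' : m = n * ((q : ℤ) + 1) := by exact_mod_cast hmc
    exact ⟨n, by rw [hm']; ring⟩
  have hNc : (N : ℂ) = ((q : ℂ) - 1) * ((q : ℂ) + 1) := by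
    rw [hN]
    push_cast [Nat.cast_sub h1q]
    ring
  have hterm : ∀ L : ℕ, Complex.exp (2 * (Real.pi : ℂ) * Complex.I * d * (L : ℂ) / (N : ℂ))
      = ω ^ L := by
    intro L
    rw [hω, ← Complex.exp_nat_mul]
    congr 1
    rw [hd, hNc]
    field_simp
  simp only [hterm]
  -- now work with f : ↥K → ZMod (q+1)
  have hne0 : ∀ t : ↥K, (t : F) - α ≠ 0 := by
    intro t h
    exact hα (sub_eq_zero.mp h ▸ t.2)
  have hlogt : ∀ t : ↥K, (g : F) ^ (log ((t : F) - α)) = (t : F) - α :=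
    fun t => (hlog _ (hne0 t)).2
  set f : ↥K → ZMod (q + 1) := fun t => ((log ((t : F) - α) : ℕ) : ZMod (q + 1)) with hf
  have hfinj : Function.Injective f := by
    intro t s h
    have hmod : log ((t : F) - α) % (q + 1) = log ((s : F) - α) % (q + 1) :=
      (ZMod.natCast_eq_natCast_iff _ _ _).1 h
    apply Subtype.ext
    rcases le_total (log ((s : F) - α)) (log ((t : F) - α)) with hle | hle
    · exact inj_aux q hq2 hF K hK α hα g hmod hle t.2 s.2 (hlogt t).symm (hlogt s).symm
    · exact (inj_aux q hq2 hF K hK α hα g hmod.symm hle s.2 t.2 (hlogt s).symm (hlogt t).symm).symm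
  have hf0 : ∀ t : ↥K, f t ≠ 0 := by
    intro t h
    have hdvd : (q + 1) ∣ log ((t : F) - α) := (ZMod.natCast_eq_zero_iff _ _).1 h
    obtain ⟨k, hk⟩ := hdvd
    apply hα
    have hmem : (t : F) - α ∈ K := by
      rw [← hlogt t, hk]
      exact gpow_mem q hq2 hF K hK g k
    have hα2 : α = (t : F) - ((t : F) - α) := by ring
    rw [hα2]
    exact K.sub_mem t.2 hmem
  have himg : Finset.univ.image f = Finset.univ.erase (0 : ZMod (q + 1)) := by
    apply Finset.eq_of_subset_of_card_le
    · intro r hr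
      rw [Finset.mem_image] at hr
      obtain ⟨t, _, rfl⟩ := hr
      exact Finset.mem_erase.mpr ⟨hf0 t, Finset.mem_univ _⟩
    · rw [Finset.card_erase_of_mem (Finset.mem_univ _),
        Finset.card_image_of_injective _ hfinj]
      have h1 : (Finset.univ : Finset (ZMod (q + 1))).card = q + 1 := by
        rw [Finset.card_univ, ZMod.card]
      have h2 : (Finset.univ : Finset ↥K).card = q := by rw [Finset.card_univ, hK]
      omega
  have hstep : ∀ t : ↥K, ω ^ (log ((t : F) - α)) = ω ^ (f t).val := by
    intro t
    rw [hf]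
    simp only []
    rw [ZMod.val_natCast]
    exact pow_eq_pow_mod _ hωpow
  calc (1 : ℂ) + ∑ t : ↥K, ω ^ (log ((t : F) - α))
      = (1 : ℂ) + ∑ t : ↥K, ω ^ (f t).val := by rw [Finset.sum_congr rfl (fun t _ => hstep t)]
    _ = (1 : ℂ) + ∑ r ∈ Finset.univ.image f, ω ^ r.val := by
        rw [Finset.sum_image (fun x _ y _ h => hfinj h)]
    _ = ω ^ (0 : ZMod (q + 1)).val + ∑ r ∈ Finset.univ.erase (0 : ZMod (q + 1)), ω ^ r.val := by
        rw [himg, ZMod.val_zero, pow_zero]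
    _ = ∑ r : ZMod (q + 1), ω ^ r.val :=
        Finset.add_sum_erase Finset.univ (fun r : ZMod (q + 1) => ω ^ r.val) (Finset.mem_univ _)
    _ = ∑ i ∈ Finset.range (q + 1), ω ^ i := Fin.sum_univ_eq_sum_range (fun i => ω ^ i) (q + 1)
    _ = (ω ^ (q + 1) - 1) / (ω - 1) := geom_sum_eq hωne _
    _ = 0 := by rw [hωpow]; simp


/-- The `j`-th column of the `(q+1) × (q²−1)` partial Fourier matrix
`Φ = (1/√(q+1))·𝓕^{(N)}_{M ∪ {0}}`: it is a vector indexed by `Option ↥K` whose entry at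
`none` (coming from the row `F_0`) is `1/√(q+1)` and whose entry at `some t` (coming from
the row `F_{log_g(t−α)}`) is `(1/√(q+1))·exp(2πi·j·log_g(t−α)/N)`. -/
noncomputable def fourierCol {F : Type*} [Field F] (K : Subfield F) (α : F)
    (log : F → ℕ) (q N j : ℕ) : Option ↥K → ℂ :=
  fun i => (1 / (Real.sqrt (q + 1) : ℂ)) *
    i.elim 1 (fun t => Complex.exp (2 * (Real.pi : ℂ) * Complex.I * (j : ℂ) *
      (log ((t : F) - α) : ℂ) / (N : ℂ)))

/-- **Theorem 3.4(1): orthonormal bases inside the partial Fourier matrix.**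
Let `q` be a prime power, `N = q² − 1`, `F` a finite field with `q²` elements, `K` a
subfield with `q` elements, `α ∈ F \ K`, and `g` a generator of `Fˣ`.  Then for all
`0 ≤ k₁, k₂ ≤ N−1` with `k₁ ≠ k₂` and `(q−1) ∣ (k₁ − k₂)` one has
`1 + ∑_{t∈K} exp(2πi·(k₁−k₂)·log_g(t−α)/N) = 0`; consequently, for each `0 ≤ j ≤ q−2`
the `q+1` columns of `Φ` indexed by `T_j = {j + k(q−1) : 0 ≤ k ≤ q}` form an orthonormal
set in `ℂ^{q+1}`. -/
theorem partial_fourier_orthonormal_classes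
    (q N : ℕ) (hq : IsPrimePow q) (hN : N = q ^ 2 - 1)
    (F : Type*) [Field F] [Fintype F]
    (hF : Fintype.card F = q ^ 2)
    (K : Subfield F) [Fintype ↥K] (hK : Fintype.card ↥K = q)
    (α : F) (hα : α ∉ K)
    (g : Fˣ) (hg : ∀ x : Fˣ, x ∈ Subgroup.zpowers g)
    (log : F → ℕ)
    (hlog : ∀ u : F, u ≠ 0 → log u < N ∧ (g : F) ^ log u = u) :
    (∀ k₁ k₂ : ℕ, k₁ < N → k₂ < N → k₁ ≠ k₂ → ((q : ℤ) - 1) ∣ ((k₁ : ℤ) - (k₂ : ℤ)) →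
      (1 : ℂ) + ∑ t : ↥K, Complex.exp (2 * (Real.pi : ℂ) * Complex.I *
        ((k₁ : ℂ) - (k₂ : ℂ)) * (log ((t : F) - α) : ℂ) / (N : ℂ)) = 0) ∧
    (∀ j : ℕ, j ≤ q - 2 → ∀ k₁ k₂ : ℕ, k₁ ≤ q → k₂ ≤ q →
      (∑ i : Option ↥K,
          (starRingEnd ℂ) (fourierCol K α log q N (j + k₁ * (q - 1)) i) *
            fourierCol K α log q N (j + k₂ * (q - 1)) i) =
        if k₁ = k₂ then 1 else 0) := by
  have hq2 : 2 ≤ q := hq.two_le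
  have h1q : 1 ≤ q ^ 2 := Nat.one_le_pow _ _ (by omega)
  have hNq : (N : ℤ) = ((q : ℤ) - 1) * ((q : ℤ) + 1) := by
    rw [hN]; push_cast [Nat.cast_sub h1q]; ring
  have hN3 : 3 ≤ N := by
    have : 4 ≤ q ^ 2 := by nlinarith
    omega
  have part1 : ∀ k₁ k₂ : ℕ, k₁ < N → k₂ < N → k₁ ≠ k₂ →
      ((q : ℤ) - 1) ∣ ((k₁ : ℤ) - (k₂ : ℤ)) →
      (1 : ℂ) + ∑ t : ↥K, Complex.exp (2 * (Real.pi : ℂ) * Complex.I *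
        ((k₁ : ℂ) - (k₂ : ℂ)) * (log ((t : F) - α) : ℂ) / (N : ℂ)) = 0 := by
    intro k₁ k₂ h1 h2 hne hdvd
    obtain ⟨m, hm⟩ := hdvd
    have hmnd : ¬ ((q : ℤ) + 1) ∣ m := by
      rintro ⟨c, hc⟩
      have hNz : (k₁ : ℤ) - (k₂ : ℤ) = (N : ℤ) * c := by
        rw [hm, hc, hNq]; ring
      have hb1 : (k₁ : ℤ) - (k₂ : ℤ) < (N : ℤ) := by
        have : (k₁ : ℤ) < N := by exact_mod_cast h1
        have : (0 : ℤ) ≤ k₂ := Int.natCast_nonneg _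
        omega
      have hb2 : -(N : ℤ) < (k₁ : ℤ) - (k₂ : ℤ) := by
        have : (k₂ : ℤ) < N := by exact_mod_cast h2
        have : (0 : ℤ) ≤ k₁ := Int.natCast_nonneg _
        omega
      have hN0 : (0 : ℤ) < (N : ℤ) := by exact_mod_cast Nat.lt_of_lt_of_le (by omega) hN3
      have hc0 : c = 0 := by
        rcases lt_trichotomy c 0 with h | h | h
        · nlinarith
        · exact h
        · nlinarith
      rw [hc0, mul_zero] at hNz
      exact hne (by exact_mod_cast sub_eq_zero.mp hNz)
    have hd : ((k₁ : ℂ) - (k₂ : ℂ)) = (m : ℂ) * ((q : ℂ) - 1) := by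
      have := congrArg (Int.cast : ℤ → ℂ) hm
      push_cast at this
      linear_combination this
    exact key_sum q N hq2 hF hN K hK α hα g log hlog m hmnd _ hd
  refine ⟨part1, ?_⟩
  intro j hj k₁ k₂ hk₁ hk₂
  classical
  set c : ℂ := 1 / ((Real.sqrt ((q : ℝ) + 1)) : ℂ) with hc
  have hsq : ((Real.sqrt ((q : ℝ) + 1)) : ℂ) * ((Real.sqrt ((q : ℝ) + 1)) : ℂ) = (q : ℂ) + 1 := by
    rw [← Complex.ofReal_mul, Real.mul_self_sqrt (by positivity)]
    push_cast; ring
  have hq1 : ((q : ℂ) + 1) ≠ 0 := by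
    have : ((q + 1 : ℕ) : ℂ) ≠ 0 := Nat.cast_ne_zero.mpr (by omega)
    push_cast at this; exact this
  have hcc : c * c = 1 / ((q : ℂ) + 1) := by
    rw [hc, div_mul_div_comm, one_mul, hsq]
  have hconjc : (starRingEnd ℂ) c = c := by
    rw [hc]
    simp [Complex.conj_ofReal]
  -- the exponent appearing in column number `a`, row `t`
  have hprod : ∀ (a b : ℕ) (t : ↥K),
      (starRingEnd ℂ) (fourierCol K α log q N a (some t)) * fourierCol K α log q N b (some t)
      = c * c * Complex.exp (2 * (Real.pi : ℂ) * Complex.I * ((b : ℂ) - (a : ℂ)) *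
          (log ((t : F) - α) : ℂ) / (N : ℂ)) := by
    intro a b t
    show (starRingEnd ℂ) (c * Complex.exp (2 * (Real.pi : ℂ) * Complex.I * (a : ℂ) *
        (log ((t : F) - α) : ℂ) / (N : ℂ))) * (c * Complex.exp (2 * (Real.pi : ℂ) * Complex.I * (b : ℂ) *
        (log ((t : F) - α) : ℂ) / (N : ℂ))) = _
    rw [map_mul, hconjc, ← Complex.exp_conj]
    have hconjz : (starRingEnd ℂ) (2 * (Real.pi : ℂ) * Complex.I * (a : ℂ) *
        (log ((t : F) - α) : ℂ) / (N : ℂ))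
        = -(2 * (Real.pi : ℂ) * Complex.I * (a : ℂ) * (log ((t : F) - α) : ℂ) / (N : ℂ)) := by
      simp [map_div₀, map_mul, Complex.conj_I, Complex.conj_ofReal, map_ofNat]
      ring
    rw [hconjz]
    rw [show c * Complex.exp (-(2 * (Real.pi : ℂ) * Complex.I * (a : ℂ) *
        (log ((t : F) - α) : ℂ) / (N : ℂ))) * (c * Complex.exp (2 * (Real.pi : ℂ) * Complex.I * (b : ℂ) *
        (log ((t : F) - α) : ℂ) / (N : ℂ))) = c * c * (Complex.exp (-(2 * (Real.pi : ℂ) * Complex.I * (a : ℂ) *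
        (log ((t : F) - α) : ℂ) / (N : ℂ))) * Complex.exp (2 * (Real.pi : ℂ) * Complex.I * (b : ℂ) *
        (log ((t : F) - α) : ℂ) / (N : ℂ))) from by ring, ← Complex.exp_add]
    congr 1
    ring
  have hnone : ∀ (a b : ℕ),
      (starRingEnd ℂ) (fourierCol K α log q N a (none : Option ↥K)) *
        fourierCol K α log q N b (none : Option ↥K) = c * c := by
    intro a b
    show (starRingEnd ℂ) (c * 1) * (c * 1) = c * c
    simp [hconjc]
  rw [Fintype.sum_option, hnone]
  rw [Finset.sum_congr rfl (fun t _ => hprod (j + k₁ * (q - 1)) (j + k₂ * (q - 1)) t)]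
  by_cases hk : k₁ = k₂
  · subst hk
    rw [if_pos rfl]
    have hzero : ∀ t : ↥K, c * c * Complex.exp (2 * (Real.pi : ℂ) * Complex.I *
        (((j + k₁ * (q - 1) : ℕ) : ℂ) - ((j + k₁ * (q - 1) : ℕ) : ℂ)) *
        (log ((t : F) - α) : ℂ) / (N : ℂ)) = c * c := by
      intro t
      rw [sub_self]
      norm_num
    rw [Finset.sum_congr rfl (fun t _ => hzero t), Finset.sum_const, Finset.card_univ, hK,
      nsmul_eq_mul, hcc]
    field_simp
    ring
  · rw [if_neg hk]
    -- bounds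
    have hlt : ∀ k : ℕ, k ≤ q → j + k * (q - 1) < N := by
      intro k hkq
      obtain ⟨r, rfl⟩ := Nat.exists_eq_add_of_le hq2
      have hNr : N = r * r + 4 * r + 3 := by
        rw [hN]
        have h : (2 + r) ^ 2 = r * r + 4 * r + 4 := by ring
        omega
      have hjr : j ≤ r := by omega
      have hk' : k * (r + 1) ≤ (r + 2) * (r + 1) :=
        Nat.mul_le_mul_right _ (by omega : k ≤ r + 2)
      have hexp : (r + 2) * (r + 1) = r * r + 3 * r + 2 := by ring
      have hsub : (2 + r) - 1 = r + 1 := by omega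
      rw [hsub, hNr]
      linarith
    have hne' : j + k₂ * (q - 1) ≠ j + k₁ * (q - 1) := by
      intro h
      apply hk
      have := Nat.add_left_cancel h
      exact (Nat.eq_of_mul_eq_mul_right (by omega) this).symm
    have hdvd' : ((q : ℤ) - 1) ∣ ((j + k₂ * (q - 1) : ℕ) : ℤ) - ((j + k₁ * (q - 1) : ℕ) : ℤ) := by
      refine ⟨(k₂ : ℤ) - (k₁ : ℤ), ?_⟩
      push_cast [Nat.cast_sub (by omega : 1 ≤ q)]
      ring
    have h0 := part1 (j + k₂ * (q - 1)) (j + k₁ * (q - 1)) (hlt k₂ hk₂) (hlt k₁ hk₁) hne' hdvd'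
    rw [← Finset.mul_sum]
    calc c * c + c * c * (∑ t : ↥K, Complex.exp (2 * (Real.pi : ℂ) * Complex.I *
          (((j + k₂ * (q - 1) : ℕ) : ℂ) - ((j + k₁ * (q - 1) : ℕ) : ℂ)) *
          (log ((t : F) - α) : ℂ) / (N : ℂ)))
        = c * c * ((1 : ℂ) + ∑ t : ↥K, Complex.exp (2 * (Real.pi : ℂ) * Complex.I *
          (((j + k₂ * (q - 1) : ℕ) : ℂ) - ((j + k₁ * (q - 1) : ℕ) : ℂ)) *
          (log ((t : F) - α) : ℂ) / (N : ℂ))) := by ring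
      _ = 0 := by rw [h0, mul_zero]
end
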